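/- arXiv:1803.06864 — 3 statements merged into one kernel-verified Lean document; each statement's English description precedes it below -/
import Mathlib

section
/- If x* is a Pareto optimal point of the unconstrained multiobjective optimization problem min_{x in R^n} f(x), where f: R^n -> R^k is continuously differentiable, then there exists alpha in R^k with alpha_i >= 0 for all i, sum_{i=1}^k alpha_i = 1, and sum_{i=1}^k alpha_i * grad f_i(x*) = 0. -/
/-!
If no convex combination of the gradients `∇fᵢ(x*)` vanished, the separating hyperplane theorem,
applied in the (finite-dimensional, hence reflexive) dual space, would give a direction `d` with
`∇fᵢ(x*) d < 0` for every `i`. A small step from `x*` along `d` then strictly decreases every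
objective, contradicting Pareto optimality.
-/

open Set Filter Topology

def IsParetoOptimal {ι α β : Type*} [Preorder β] (f : ι → α → β) (x : α) : Prop :=
  ¬ ∃ y, (∀ i, f i y ≤ f i x) ∧ ∃ i, f i y ≠ f i x

theorem convexHull_range_eq_image_stdSimplex {R ι E : Type*} [Field R] [LinearOrder R]
    [IsStrictOrderedRing R] [Fintype ι] [AddCommGroup E] [Module R E] (v : ι → E) :
    convexHull R (range v) = Fintype.linearCombination R v '' stdSimplex R ι := by
  classical
  have hv : range v = Fintype.linearCombination R v '' range fun i ↦ Pi.single i 1 := by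
    rw [← range_comp]
    congr 1
    ext i
    simp [Fintype.linearCombination_apply_single]
  rw [hv, ← LinearMap.image_convexHull, convexHull_rangle_single_eq_stdSimplex]

theorem NormedSpace.inclusionInDoubleDual_surjective (𝕜 E : Type*) [NontriviallyNormedField 𝕜]
    [CompleteSpace 𝕜] [NormedAddCommGroup E] [NormedSpace 𝕜 E] [FiniteDimensional 𝕜 E] :
    Function.Surjective (inclusionInDoubleDual 𝕜 E) := by
  intro Φ
  let Φ' : Module.Dual 𝕜 (Module.Dual 𝕜 E) := Φ.toLinearMap ∘ₗ
    (LinearMap.toContinuousLinearMap : Module.Dual 𝕜 E ≃ₗ[𝕜] StrongDual 𝕜 E).toLinearMap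
  refine ⟨(Module.evalEquiv 𝕜 E).symm Φ', ContinuousLinearMap.ext fun ψ ↦ ?_⟩
  exact Module.apply_evalEquiv_symm_apply 𝕜 E ψ.toLinearMap Φ'

/-- Gordan's alternative. -/
theorem exists_forall_apply_neg_of_zero_notMem_convexHull {ι E : Type*} [Finite ι]
    [NormedAddCommGroup E] [NormedSpace ℝ E] [FiniteDimensional ℝ E] {g : ι → StrongDual ℝ E}
    (h : 0 ∉ convexHull ℝ (range g)) : ∃ d : E, ∀ i, g i d < 0 := by
  obtain ⟨Φ, u, hΦ0, hΦ⟩ := geometric_hahn_banach_point_closed (convex_convexHull ℝ _)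
    ((finite_range g).isClosed_convexHull (𝕜 := ℝ)) h
  obtain ⟨d, rfl⟩ := NormedSpace.inclusionInDoubleDual_surjective ℝ E Φ
  refine ⟨-d, fun i ↦ ?_⟩
  have hi := hΦ (g i) (subset_convexHull ℝ _ (mem_range_self i))
  simp only [NormedSpace.dual_def, zero_apply] at hΦ0 hi
  rw [map_neg]
  linarith

theorem HasFDerivAt.eventually_lt_of_apply_neg {E : Type*} [NormedAddCommGroup E]
    [NormedSpace ℝ E] {f : E → ℝ} {f' : StrongDual ℝ E} {x d : E} (hf : HasFDerivAt f f' x)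
    (hd : f' d < 0) : ∀ᶠ t in 𝓝[>] (0 : ℝ), f (x + t • d) < f x := by
  have hline : HasDerivAt (fun t : ℝ ↦ f (x + t • d)) (f' d) 0 := by
    have hx : HasFDerivAt f f' (x + (0 : ℝ) • d) := by simpa using hf
    simpa [Function.comp_def] using
      hx.comp_hasDerivAt 0 (((hasDerivAt_id (0 : ℝ)).smul_const d).const_add x)
  filter_upwards [hline.tendsto_slope_zero_right.eventually (gt_mem_nhds hd),
    self_mem_nhdsWithin] with t hslope (ht : 0 < t)
  simp only [zero_add, zero_smul, add_zero, smul_eq_mul] at hslope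
  exact sub_neg.mp (neg_of_mul_neg_right hslope (inv_nonneg.mpr ht.le))

theorem IsParetoOptimal.zero_mem_convexHull_fderiv {ι E : Type*} [Finite ι] [Nonempty ι]
    [NormedAddCommGroup E] [NormedSpace ℝ E] [FiniteDimensional ℝ E] {f : ι → E → ℝ} {x : E}
    (hx : IsParetoOptimal f x) (hf : ∀ i, DifferentiableAt ℝ (f i) x) :
    (0 : StrongDual ℝ E) ∈ convexHull ℝ (range fun i ↦ fderiv ℝ (f i) x) := by
  by_contra h
  obtain ⟨d, hd⟩ := exists_forall_apply_neg_of_zero_notMem_convexHull h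
  have hdescent : ∀ᶠ t in 𝓝[>] (0 : ℝ), ∀ i, f i (x + t • d) < f i x :=
    eventually_all.2 fun i ↦ (hf i).hasFDerivAt.eventually_lt_of_apply_neg (hd i)
  obtain ⟨t, ht⟩ := hdescent.exists
  obtain ⟨i⟩ := ‹Nonempty ι›
  exact hx ⟨x + t • d, fun j ↦ (ht j).le, i, (ht i).ne⟩

/-- Kuhn-Tucker necessary condition: at a Pareto optimal point of an
unconstrained MOP with continuously differentiable objectives, some convex combination
of the gradients vanishes. -/
theorem kkt_necessary_condition (n k : ℕ) (hk : 0 < k)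
    (f : Fin k → (Fin n → ℝ) → ℝ) (hf : ∀ i, ContDiff ℝ 1 (f i))
    (xstar : Fin n → ℝ)
    (hpareto : ¬ ∃ x : Fin n → ℝ, (∀ i, f i x ≤ f i xstar) ∧ (∃ i, f i x ≠ f i xstar)) :
    ∃ α : Fin k → ℝ, (∀ i, 0 ≤ α i) ∧ (∑ i, α i = 1) ∧
      (∑ i, α i • fderiv ℝ (f i) xstar) = 0 := by
  have : Nonempty (Fin k) := Fin.pos_iff_nonempty.mp hk
  have hzero := IsParetoOptimal.zero_mem_convexHull_fderiv hpareto
    fun i ↦ ((hf i).differentiable one_ne_zero).differentiableAt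
  rw [convexHull_range_eq_image_stdSimplex] at hzero
  obtain ⟨α, ⟨hα₀, hα₁⟩, hα⟩ := hzero
  exact ⟨α, hα₀, hα₁, by rwa [Fintype.linearCombination_apply] at hα⟩
end

section
/- Let f: R^n -> R^k be twice continuously differentiable, k > 1, and suppose D_x F-tilde(x, alpha) is invertible for every Pareto critical point x and every alpha in A(x). Then the closure of P_int in R^n equals P, i.e. every Pareto critical point is a limit of Pareto critical points admitting a strictly positive KKT multiplier. -/
noncomputable def grad (n : ℕ) (g : (Fin n → ℝ) → ℝ) (x : Fin n → ℝ) : Fin n → ℝ :=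
  fun j => fderiv ℝ g x (Pi.single j 1)

noncomputable def Ftilde (n K : ℕ) (f : Fin (K + 1) → (Fin n → ℝ) → ℝ)
    (p : (Fin n → ℝ) × (Fin K → ℝ)) : Fin n → ℝ :=
  (∑ i : Fin K, p.2 i •
      (grad n (f i.castSucc) p.1 - grad n (f (Fin.last K)) p.1))
    + grad n (f (Fin.last K)) p.1

def openSimplex (K : ℕ) : Set (Fin K → ℝ) := {α | (∀ i, 0 < α i) ∧ ∑ i, α i < 1}

def closedSimplex (K : ℕ) : Set (Fin K → ℝ) := {α | (∀ i, 0 ≤ α i) ∧ ∑ i, α i ≤ 1}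

noncomputable def DxFtilde (n K : ℕ) (f : Fin (K + 1) → (Fin n → ℝ) → ℝ)
    (p : (Fin n → ℝ) × (Fin K → ℝ)) : (Fin n → ℝ) →L[ℝ] (Fin n → ℝ) :=
  fderiv ℝ (fun x => Ftilde n K f (x, p.2)) p.1

/-- The set of (reduced) KKT multipliers of `x`. -/
def KKTset (n K : ℕ) (f : Fin (K + 1) → (Fin n → ℝ) → ℝ) (x : Fin n → ℝ) :
    Set (Fin K → ℝ) :=
  {α | α ∈ closedSimplex K ∧ Ftilde n K f (x, α) = 0}

/-- The Pareto critical set. -/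
def ParetoCritical (n K : ℕ) (f : Fin (K + 1) → (Fin n → ℝ) → ℝ) : Set (Fin n → ℝ) :=
  {x | ∃ α, α ∈ KKTset n K f x}

/-- The Pareto critical points with a strictly positive KKT multiplier. -/
def ParetoCriticalInt (n K : ℕ) (f : Fin (K + 1) → (Fin n → ℝ) → ℝ) : Set (Fin n → ℝ) :=
  {x | ∃ α ∈ openSimplex K, Ftilde n K f (x, α) = 0}

/-!
The Pareto critical set is the projection of the closed set `{(x, α) | α ∈ Δ̄, F̃(x, α) = 0}`
along the compact simplex `Δ̄`, hence closed, so it contains the closure of `P_int`.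
Conversely, if `F̃(x, α) = 0` with `D_x F̃(x, α)` invertible, the implicit function theorem solves
`F̃(·, β) = 0` near `x` for every `β` near `α`; taking `β` in the open simplex, which is dense in
the closed one, yields points of `P_int` arbitrarily close to `x`.
-/

open Filter Topology

theorem isClosed_setOf_exists_mem_of_isCompact {X Y : Type*} [TopologicalSpace X]
    [TopologicalSpace Y] {s : Set Y} (hs : IsCompact s) {C : Set (X × Y)} (hC : IsClosed C) :
    IsClosed {x | ∃ y ∈ s, (x, y) ∈ C} := by
  have := isCompact_iff_compactSpace.mp hs
  convert isClosedMap_fst_of_compactSpace (Y := s) _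
    (hC.preimage (continuous_fst.prodMk (continuous_subtype_val.comp continuous_snd)))
  ext x
  simp [Subtype.exists]

theorem HasStrictFDerivAt.eventually_exists_mem_apply_eq {𝕜 : Type*} [NontriviallyNormedField 𝕜]
    {E₁ : Type*} [NormedAddCommGroup E₁] [NormedSpace 𝕜 E₁] [CompleteSpace E₁]
    {E₂ : Type*} [NormedAddCommGroup E₂] [NormedSpace 𝕜 E₂] [CompleteSpace E₂]
    {F : Type*} [NormedAddCommGroup F] [NormedSpace 𝕜 F] [CompleteSpace F]
    {f : E₁ × E₂ → F} {f' : E₁ × E₂ →L[𝕜] F} {u : E₁ × E₂} (hf : HasStrictFDerivAt f f' u)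
    (hf₁ : (f' ∘L .inl 𝕜 E₁ E₂).IsInvertible) {U : Set E₁} (hU : U ∈ 𝓝 u.1) :
    ∀ᶠ y in 𝓝 u.2, ∃ x ∈ U, f (x, y) = f u := by
  -- Mathlib's implicit function theorem solves for the second variable.
  have hswap : HasStrictFDerivAt (f ∘ Prod.swap)
      (f' ∘L (ContinuousLinearEquiv.prodComm 𝕜 E₂ E₁ : E₂ × E₁ →L[𝕜] E₁ × E₂)) u.swap :=
    hf.comp u.swap (ContinuousLinearEquiv.prodComm 𝕜 E₂ E₁).hasStrictFDerivAt
  have hinv : ((f' ∘L (ContinuousLinearEquiv.prodComm 𝕜 E₂ E₁ : E₂ × E₁ →L[𝕜] E₁ × E₂)) ∘L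
      .inr 𝕜 E₂ E₁).IsInvertible := by
    convert hf₁ using 1
    ext
    simp
  filter_upwards [hswap.tendsto_implicitFunctionOfProdDomain hinv hU,
    hswap.eventually_apply_implicitFunctionOfProdDomain hinv] with y hyU hy
  exact ⟨_, hyU, hy⟩

theorem openSimplex_subset_closedSimplex (K : ℕ) : openSimplex K ⊆ closedSimplex K :=
  fun _ hα => ⟨fun i => (hα.1 i).le, hα.2.le⟩

theorem isCompact_closedSimplex (K : ℕ) : IsCompact (closedSimplex K) := by
  refine Metric.isCompact_of_isClosed_isBounded ?_
    ((Metric.isBounded_Icc (0 : Fin K → ℝ) 1).subset fun α hα => ⟨hα.1, fun i => ?_⟩)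
  · exact (isClosed_le continuous_const continuous_id).inter
      (isClosed_le (continuous_finsetSum _ fun i _ => continuous_apply i) continuous_const)
  · exact (Finset.single_le_sum (fun j _ => hα.1 j) (Finset.mem_univ i)).trans hα.2

theorem openSegment_subset_openSimplex {K : ℕ} {c α : Fin K → ℝ} (hc : c ∈ openSimplex K)
    (hα : α ∈ closedSimplex K) : openSegment ℝ c α ⊆ openSimplex K := by
  rintro _ ⟨a, b, ha, hb, hab, rfl⟩
  refine ⟨fun i => ?_, ?_⟩
  · simp only [Pi.add_apply, Pi.smul_apply, smul_eq_mul]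
    nlinarith [hc.1 i, hα.1 i]
  · simp only [Pi.add_apply, Pi.smul_apply, smul_eq_mul, Finset.sum_add_distrib, ← Finset.mul_sum]
    nlinarith [hc.2, hα.2]

theorem barycenter_mem_openSimplex (K : ℕ) : (fun _ => 1 / (K + 1 : ℝ)) ∈ openSimplex K := by
  refine ⟨fun _ => by positivity, ?_⟩
  rw [Finset.sum_const, Finset.card_univ, Fintype.card_fin, nsmul_eq_mul, mul_one_div,
    div_lt_one (by positivity)]
  linarith

theorem closedSimplex_subset_closure_openSimplex (K : ℕ) :
    closedSimplex K ⊆ closure (openSimplex K) := fun _ hα =>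
  closure_mono (openSegment_subset_openSimplex (barycenter_mem_openSimplex K) hα)
    (segment_subset_closure_openSegment (right_mem_segment ℝ _ _))

theorem contDiff_grad {n : ℕ} {m : WithTop ℕ∞} {g : (Fin n → ℝ) → ℝ}
    (hg : ContDiff ℝ (m + 1) g) :
    ContDiff ℝ m (grad n g) :=
  contDiff_pi.mpr fun _ => (hg.fderiv_right le_rfl).clm_apply contDiff_const

theorem contDiff_Ftilde {n K : ℕ} {m : WithTop ℕ∞} {f : Fin (K + 1) → (Fin n → ℝ) → ℝ}
    (hf : ∀ i, ContDiff ℝ (m + 1) (f i)) : ContDiff ℝ m (Ftilde n K f) := by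
  have hgrad : ∀ i, ContDiff ℝ m fun p : (Fin n → ℝ) × (Fin K → ℝ) => grad n (f i) p.1 :=
    fun i => (contDiff_grad (hf i)).comp contDiff_fst
  exact (ContDiff.sum fun i _ =>
    (contDiff_pi.mp contDiff_snd i).smul ((hgrad _).sub (hgrad _))).add (hgrad _)

theorem DxFtilde_eq_fderiv_comp_inl {n K : ℕ} {f : Fin (K + 1) → (Fin n → ℝ) → ℝ}
    {x : Fin n → ℝ} {α : Fin K → ℝ} (hF : DifferentiableAt ℝ (Ftilde n K f) (x, α)) :
    DxFtilde n K f (x, α) = fderiv ℝ (Ftilde n K f) (x, α) ∘L .inl ℝ _ _ := by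
  rw [DxFtilde]
  exact (hF.hasFDerivAt.comp x (hasFDerivAt_prodMk_left (𝕜 := ℝ) x α)).fderiv

theorem paretoCriticalInt_subset_paretoCritical (n K : ℕ) (f : Fin (K + 1) → (Fin n → ℝ) → ℝ) :
    ParetoCriticalInt n K f ⊆ ParetoCritical n K f :=
  fun _ ⟨α, hα, hx⟩ => ⟨α, openSimplex_subset_closedSimplex K hα, hx⟩

theorem isClosed_paretoCritical {n K : ℕ} {f : Fin (K + 1) → (Fin n → ℝ) → ℝ}
    (hF : Continuous (Ftilde n K f)) : IsClosed (ParetoCritical n K f) :=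
  isClosed_setOf_exists_mem_of_isCompact (isCompact_closedSimplex K)
    (isClosed_singleton.preimage hF)

theorem closure_Pint_eq_P_general (n K : ℕ)
    (f : Fin (K + 1) → (Fin n → ℝ) → ℝ) (hf : ∀ i, ContDiff ℝ 2 (f i))
    (hinv : ∀ x ∈ ParetoCritical n K f, ∀ α ∈ KKTset n K f x,
      IsUnit (DxFtilde n K f (x, α))) :
    closure (ParetoCriticalInt n K f) = ParetoCritical n K f := by
  have hF : ContDiff ℝ 1 (Ftilde n K f) := contDiff_Ftilde hf
  refine (closure_minimal (paretoCriticalInt_subset_paretoCritical n K f)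
    (isClosed_paretoCritical hF.continuous)).antisymm ?_
  rintro x ⟨α, hα, hxα⟩
  obtain ⟨D, hD⟩ := hinv x ⟨α, hα, hxα⟩ α ⟨hα, hxα⟩
  have hstrict : HasStrictFDerivAt (Ftilde n K f) (fderiv ℝ (Ftilde n K f) (x, α)) (x, α) :=
    hF.contDiffAt.hasStrictFDerivAt one_ne_zero
  have hpartial : (fderiv ℝ (Ftilde n K f) (x, α) ∘L .inl ℝ _ _).IsInvertible := by
    rw [← DxFtilde_eq_fderiv_comp_inl (hF.differentiable one_ne_zero _), ← hD]
    exact ⟨ContinuousLinearEquiv.unitsEquiv ℝ _ D, rfl⟩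
  refine mem_closure_iff_nhds.2 fun U hU => ?_
  obtain ⟨β, hβ, y, hyU, hy⟩ :=
    ((mem_closure_iff_frequently.1 (closedSimplex_subset_closure_openSimplex K hα)).and_eventually
      (hstrict.eventually_exists_mem_apply_eq hpartial hU)).exists
  exact ⟨y, hyU, β, hβ, hy.trans hxα⟩

/-- if `D_x F̃(x,α)` is invertible for all `x ∈ P` and `α ∈ A(x)`, then the
closure of `P_int` equals `P`. -/
theorem closure_Pint_eq_P (n K : ℕ) (hK : 0 < K)
    (f : Fin (K + 1) → (Fin n → ℝ) → ℝ) (hf : ∀ i, ContDiff ℝ 2 (f i))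
    (hinv : ∀ x ∈ ParetoCritical n K f, ∀ α ∈ KKTset n K f x,
      IsUnit (DxFtilde n K f (x, α))) :
    closure (ParetoCriticalInt n K f) = ParetoCritical n K f :=
  closure_Pint_eq_P_general n K f hf hinv
end

section
/- Let x0 be a Pareto critical point admitting a strictly positive KKT multiplier (all components > 0). If that KKT multiplier is the unique one (i.e. |A(x0)| = 1), then rank(Df(x0)) = k - 1. Equivalently, if rank(Df(x0)) < k - 1 and x0 has a strictly positive KKT multiplier, then x0 has more than one KKT multiplier and at least one KKT multiplier with some zero component. -/
open Matrix

noncomputable def Jac (n k : ℕ) (f : Fin k → (Fin n → ℝ) → ℝ) (x : Fin n → ℝ) :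
    Matrix (Fin k) (Fin n) ℝ :=
  Matrix.of fun i j => fderiv ℝ (f i) x (Pi.single j 1)

def IsKKTMultiplier (n k : ℕ) (f : Fin k → (Fin n → ℝ) → ℝ) (x : Fin n → ℝ)
    (α : Fin k → ℝ) : Prop :=
  (∀ i, 0 ≤ α i) ∧ ∑ i, α i = 1 ∧ (∑ i, α i • fderiv ℝ (f i) x) = 0

lemma sum_smul_fderiv_eq_zero_iff (n k : ℕ) (f : Fin k → (Fin n → ℝ) → ℝ)
    (x₀ : Fin n → ℝ) (β : Fin k → ℝ) :
    (∑ i, β i • fderiv ℝ (f i) x₀) = 0 ↔ (Jac n k f x₀)ᵀ.mulVec β = 0 := by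
  constructor
  · intro h
    funext j
    have h2 := congrArg (fun L : (Fin n → ℝ) →L[ℝ] ℝ => L (Pi.single j 1)) h
    simp only [ContinuousLinearMap.coe_sum', Finset.sum_apply,
      ContinuousLinearMap.coe_smul', Pi.smul_apply, ContinuousLinearMap.zero_apply] at h2
    simp only [Matrix.mulVec, dotProduct, Matrix.transpose_apply, Jac,
      Matrix.of_apply, Pi.zero_apply]
    rw [Finset.sum_congr rfl (fun i _ => mul_comm _ _)]
    simpa using h2
  · intro h
    have hlin : ((∑ i, β i • fderiv ℝ (f i) x₀ : (Fin n → ℝ) →L[ℝ] ℝ) :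
        (Fin n → ℝ) →ₗ[ℝ] ℝ) = 0 := by
      apply Module.Basis.ext (Pi.basisFun ℝ (Fin n))
      intro j
      have hj := congrFun h j
      simp only [Matrix.mulVec, dotProduct, Matrix.transpose_apply, Jac,
        Matrix.of_apply, Pi.zero_apply] at hj
      simp only [Pi.basisFun_apply, ContinuousLinearMap.coe_coe,
        ContinuousLinearMap.coe_sum', Finset.sum_apply, ContinuousLinearMap.coe_smul',
        Pi.smul_apply, LinearMap.zero_apply, smul_eq_mul]
      rw [Finset.sum_congr rfl (fun i _ => mul_comm _ _)]
      exact hj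
    exact ContinuousLinearMap.coe_injective (by simpa using hlin)

lemma kkt_iff (n k : ℕ) (f : Fin k → (Fin n → ℝ) → ℝ) (x₀ : Fin n → ℝ) (β : Fin k → ℝ) :
    IsKKTMultiplier n k f x₀ β ↔
      ((∀ i, 0 ≤ β i) ∧ ∑ i, β i = 1 ∧ (Jac n k f x₀)ᵀ.mulVec β = 0) := by
  unfold IsKKTMultiplier
  rw [sum_smul_fderiv_eq_zero_iff]

/-- if `x₀` has a strictly positive KKT multiplier `α`, then:
(i) if `α` is the unique KKT multiplier, `rank Df(x₀) = k - 1`; equivalently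
(ii) if `rank Df(x₀) < k - 1`, there is another KKT multiplier, and a KKT multiplier
with some zero component. -/
theorem rank_of_unique_positive_multiplier (n k : ℕ)
    (f : Fin k → (Fin n → ℝ) → ℝ) (hf : ∀ i, ContDiff ℝ 1 (f i))
    (x₀ : Fin n → ℝ) (α : Fin k → ℝ)
    (hα : IsKKTMultiplier n k f x₀ α) (hpos : ∀ i, 0 < α i) :
    ((∀ β, IsKKTMultiplier n k f x₀ β → β = α) → (Jac n k f x₀).rank = k - 1) ∧
    ((Jac n k f x₀).rank < k - 1 →
      (∃ β, IsKKTMultiplier n k f x₀ β ∧ β ≠ α) ∧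
      (∃ β, IsKKTMultiplier n k f x₀ β ∧ ∃ i, β i = 0)) := by
  set J := Jac n k f x₀ with hJ
  set M := (Jᵀ).mulVecLin with hM
  set N := LinearMap.ker M with hN
  have hαsum : ∑ i, α i = 1 := hα.2.1
  have hαmem : α ∈ N := by
    rw [LinearMap.mem_ker]
    exact (sum_smul_fderiv_eq_zero_iff n k f x₀ α).mp hα.2.2
  have hαne : α ≠ 0 := by
    intro h0
    rw [h0] at hαsum
    simp at hαsum
  have hk : 0 < k := by
    by_contra hk0
    push_neg at hk0
    interval_cases k
    simp at hαsum
  -- rank + dim N = k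
  have hrn : J.rank + Module.finrank ℝ N = k := by
    have := LinearMap.finrank_range_add_finrank_ker M
    rw [← Matrix.rank_transpose J]
    simpa [Matrix.rank, hM] using this
  -- dim N ≥ 1
  have hspan : Submodule.span ℝ {α} ≤ N := by
    rw [Submodule.span_le, Set.singleton_subset_iff]
    exact hαmem
  have h1 : 1 ≤ Module.finrank ℝ N := by
    calc 1 = Module.finrank ℝ (Submodule.span ℝ {α}) := (finrank_span_singleton hαne).symm
      _ ≤ Module.finrank ℝ N := Submodule.finrank_mono hspan
  -- key: from rank < k-1 construct β
  have key : J.rank < k - 1 → ∃ β, IsKKTMultiplier n k f x₀ β ∧ (∃ i, β i = 0) ∧ β ≠ α := by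
    intro hlt
    have hdim2 : 2 ≤ Module.finrank ℝ N := by omega
    have hlt' : Submodule.span ℝ {α} < N := by
      rcases lt_or_eq_of_le hspan with h | h
      · exact h
      · exfalso
        rw [← h, finrank_span_singleton hαne] at hdim2
        omega
    obtain ⟨v, hvN, hvs⟩ := SetLike.exists_of_lt hlt'
    set c : ℝ := ∑ i, v i with hc
    set w : Fin k → ℝ := v - c • α with hw
    have hwN : w ∈ N := N.sub_mem hvN (N.smul_mem c hαmem)
    have hwsum : ∑ i, w i = 0 := by
      simp [hw, Finset.sum_sub_distrib, ← Finset.mul_sum, hαsum, hc]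
    have hwne : w ≠ 0 := by
      intro h0
      apply hvs
      have : v = c • α := by
        have := sub_eq_zero.mp h0
        simpa using this
      rw [this]
      exact Submodule.smul_mem _ _ (Submodule.mem_span_singleton_self α)
    -- exists negative component
    have hneg : ∃ i, w i < 0 := by
      by_contra hno
      push_neg at hno
      apply hwne
      funext i
      have := (Finset.sum_eq_zero_iff_of_nonneg (fun i _ => hno i)).mp hwsum i (Finset.mem_univ i)
      simpa using this
    set S : Finset (Fin k) := Finset.univ.filter (fun i => w i < 0) with hS
    have hSne : S.Nonempty := by
      obtain ⟨i, hi⟩ := hneg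
      exact ⟨i, by simp [hS, hi]⟩
    obtain ⟨i₀, hi₀S, hi₀min⟩ := S.exists_min_image (fun i => α i / (-w i)) hSne
    have hwi₀ : w i₀ < 0 := by simpa [hS] using hi₀S
    set t : ℝ := α i₀ / (-w i₀) with ht
    have htpos : 0 < t := div_pos (hpos i₀) (by linarith)
    set β : Fin k → ℝ := α + t • w with hβ
    have hβi₀ : β i₀ = 0 := by
      have hne : w i₀ ≠ 0 := ne_of_lt hwi₀
      simp only [hβ, Pi.add_apply, Pi.smul_apply, smul_eq_mul, ht]
      rw [div_mul_eq_mul_div, div_neg, mul_div_assoc, div_self hne, mul_one, add_neg_cancel]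
    have hβnonneg : ∀ i, 0 ≤ β i := by
      intro i
      rcases lt_or_ge (w i) 0 with hwi | hwi
      · have hiS : i ∈ S := by simp [hS, hwi]
        have hmin := hi₀min i hiS
        have : t * (-w i) ≤ α i := by
          rw [ht]
          calc α i₀ / (-w i₀) * (-w i) ≤ α i / (-w i) * (-w i) := by
                apply mul_le_mul_of_nonneg_right hmin; linarith
            _ = α i := by
                have hne : w i ≠ 0 := ne_of_lt hwi
                field_simp
        simp only [hβ, Pi.add_apply, Pi.smul_apply, smul_eq_mul]
        linarith
      · simp only [hβ, Pi.add_apply, Pi.smul_apply, smul_eq_mul]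
        have := (hpos i).le
        nlinarith [htpos.le]
    have hβsum : ∑ i, β i = 1 := by
      simp [hβ, Finset.sum_add_distrib, ← Finset.mul_sum, hwsum, hαsum]
    have hβker : M β = 0 := by
      have : β = α + t • w := hβ
      rw [this, map_add, _root_.map_smul, LinearMap.mem_ker.mp hαmem, LinearMap.mem_ker.mp hwN]
      simp
    have hβkkt : IsKKTMultiplier n k f x₀ β := by
      rw [kkt_iff]
      exact ⟨hβnonneg, hβsum, by simpa [hM, Matrix.mulVecLin_apply, hJ, Matrix.mulVec_transpose] using hβker⟩
    refine ⟨β, hβkkt, ⟨i₀, hβi₀⟩, ?_⟩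
    intro heq
    have := hpos i₀
    rw [← heq, hβi₀] at this
    exact lt_irrefl 0 this
  constructor
  · intro huniq
    by_contra hne
    have hle : J.rank ≤ k - 1 := by omega
    have hlt : J.rank < k - 1 := lt_of_le_of_ne hle hne
    obtain ⟨β, hβkkt, _, hβne⟩ := key hlt
    exact hβne (huniq β hβkkt)
  · intro hlt
    obtain ⟨β, hβkkt, hzero, hβne⟩ := key hlt
    exact ⟨⟨β, hβkkt, hβne⟩, ⟨β, hβkkt, hzero⟩⟩
end
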